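/- If every set X ⊆ ℝ satisfying S1(O,O) is countable, then every strongly null set X ⊆ ℝ is countable. (Borel's Conjecture for the Rothberger property S1(O,O) implies Borel's Conjecture.) -/

import Mathlib

open Filter Set

/-- `f ≤* g`: `f n ≤ g n` for all but finitely many `n`. -/
def LeStar (f g : ℕ → ℕ) : Prop := ∀ᶠ n in Filter.atTop, f n ≤ g n

/-- A subset of Baire space is bounded if it has a `≤*`-upper bound. -/
def BddFam (B : Set (ℕ → ℕ)) : Prop := ∃ g : ℕ → ℕ, ∀ f ∈ B, LeStar f g

/-- A subset of Baire space is dominating if every function is `≤*` below some member. -/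
def DominatingFam (D : Set (ℕ → ℕ)) : Prop := ∀ g : ℕ → ℕ, ∃ f ∈ D, LeStar g f

/-- An open cover of a topological space. -/
def IsOpenCover {X : Type*} [TopologicalSpace X] (𝒰 : Set (Set X)) : Prop :=
  (∀ U ∈ 𝒰, IsOpen U) ∧ ⋃₀ 𝒰 = Set.univ

/-- The cover `𝒰` contains a finite subcover. -/
def HasFinSubcover {X : Type*} (𝒰 : Set (Set X)) : Prop :=
  ∃ ℱ ⊆ 𝒰, ℱ.Finite ∧ ⋃₀ ℱ = Set.univ

/-- The Hurewicz property `Ufin(O,Γ)`. -/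
def UfinOGamma (X : Type*) [TopologicalSpace X] : Prop :=
  ∀ 𝒰 : ℕ → Set (Set X),
    (∀ n, IsOpenCover (𝒰 n)) → (∀ n, ¬ HasFinSubcover (𝒰 n)) →
    ∃ ℱ : ℕ → Set (Set X),
      (∀ n, ℱ n ⊆ 𝒰 n ∧ (ℱ n).Finite) ∧
      ∀ x : X, ∀ᶠ n in Filter.atTop, x ∈ ⋃₀ ℱ n

/-- A set of reals is strongly null (has strong measure zero). -/
def StronglyNull (X : Set ℝ) : Prop :=
  ∀ ε : ℕ → ℝ, (∀ n, 0 < ε n) →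
    ∃ I : ℕ → Set ℝ, (∀ n, EMetric.diam (I n) < ENNReal.ofReal (ε n)) ∧ X ⊆ ⋃ n, I n

/-- The Rothberger property `S1(O,O)`. -/
def S1OO (X : Type*) [TopologicalSpace X] : Prop :=
  ∀ 𝒰 : ℕ → Set (Set X), (∀ n, IsOpenCover (𝒰 n)) →
    ∃ U : ℕ → Set X, (∀ n, U n ∈ 𝒰 n) ∧ (⋃ n, U n) = Set.univ

/-!
If every family of `ℵ₁` functions `ℕ → ℕ` is `≤*`-bounded, an uncountable strongly null set
contains a strongly null set `Y` of size `ℵ₁`. For a sequence of open covers of `Y`, the radii at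
which points of `Y` fit into members of the `n`-th cover are all dominated by one function `g`;
covering `Y` by sets of diameter `< 1 / (g n + 1)` then selects one member per cover, so `Y` is an
uncountable Rothberger set.

Otherwise some `f_α` (`α < ω₁`) is unbounded. Bounding `{f_β | β ≤ α}` by a strictly increasing
`F_α` makes every uncountable subfamily of `F` unbounded. Coding strictly increasing sequences as
points of the Cantor set, the codes of the `F_α` together with the countably many codes of finite
sequences form an uncountable set concentrated on the latter, and concentrated sets are
Rothberger.
-/

open Cardinal Ordinal

notation "Ω₁" => (Ordinal.ToType ω₁ : Type)

namespace BddFam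

lemma of_countable {B : Set (ℕ → ℕ)} (hB : B.Countable) : BddFam B := by
  rcases B.eq_empty_or_nonempty with rfl | hne
  · exact ⟨0, by simp⟩
  obtain ⟨σ, rfl⟩ := hB.exists_eq_range hne
  refine ⟨fun n => ∑ k ∈ Finset.range (n + 1), σ k n, ?_⟩
  rintro _ ⟨k, rfl⟩
  filter_upwards [eventually_ge_atTop k] with n hn
  exact Finset.single_le_sum (f := fun k => σ k n) (fun _ _ => Nat.zero_le _)
    (Finset.mem_range.2 (Nat.lt_succ_of_le hn))

lemma of_forall_bddAbove {B : Set (ℕ → ℕ)} (h : ∀ n, BddAbove (Function.eval n '' B)) :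
    BddFam B := by
  choose g hg using h
  exact ⟨g, fun f hf => Eventually.of_forall fun n => hg n ⟨f, hf, rfl⟩⟩

end BddFam

/-- Take the least unbounded coordinate `n`: below it only finitely many prefixes occur. -/
lemma exists_prefix_not_bddAbove {B : Set (ℕ → ℕ)} (hB : ¬ BddFam B) :
    ∃ n, ∃ s : Fin n → ℕ, ¬ BddAbove (Function.eval n '' {f ∈ B | ∀ j : Fin n, f j = s j}) := by
  classical
  have hex : ∃ n, ¬ BddAbove (Function.eval n '' B) := by
    by_contra! h
    exact hB (.of_forall_bddAbove h)
  refine ⟨Nat.find hex, ?_⟩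
  have hlt (j : ℕ) (hj : j < Nat.find hex) : BddAbove (Function.eval j '' B) :=
    not_not.1 (Nat.find_min hex hj)
  choose b hb using hlt
  by_contra! H
  set T := Set.pi univ fun j : Fin (Nat.find hex) => Iic (b j j.2)
  have hcover : Function.eval (Nat.find hex) '' B ⊆
      ⋃ s ∈ T, Function.eval (Nat.find hex) '' {f ∈ B | ∀ j : Fin (Nat.find hex), f j = s j} := by
    rintro _ ⟨f, hf, rfl⟩
    exact mem_biUnion (x := fun j : Fin (Nat.find hex) => f j) (fun j _ => hb j j.2 ⟨f, hf, rfl⟩)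
      ⟨f, ⟨hf, fun _ => rfl⟩, rfl⟩
  exact Nat.find_spec hex (((Set.Finite.pi fun _ => finite_Iic _).bddAbove_biUnion.2
    fun s _ => H s).mono hcover)

def strictMajorant (g : ℕ → ℕ) (n : ℕ) : ℕ := ∑ k ∈ Finset.range (n + 1), (g k + 1)

lemma strictMono_strictMajorant (g : ℕ → ℕ) : StrictMono (strictMajorant g) :=
  strictMono_nat_of_lt_succ fun n => by
    rw [strictMajorant, strictMajorant, Finset.sum_range_succ _ (n + 1)]
    omega

lemma le_strictMajorant (g : ℕ → ℕ) : g ≤ strictMajorant g := fun n =>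
  (Nat.le_succ _).trans <| Finset.single_le_sum (f := fun k => g k + 1)
    (fun _ _ => Nat.zero_le _) (Finset.self_mem_range_succ n)

lemma countable_Iic_omega_one (a : Ω₁) : (Iic a).Countable := by
  have hIio : (Iio a).Countable := by
    rw [← le_aleph0_iff_set_countable, ← lt_aleph_one_iff]
    simpa [mk_toType] using mk_Iio_lt a (by simp [mk_toType, ord_aleph])
  rw [← Iio_insert]
  exact hIio.insert a

lemma not_countable_univ_omega_one : ¬ (univ : Set Ω₁).Countable := by
  rw [← le_aleph0_iff_set_countable, mk_univ, mk_toType, card_omega, ← lt_aleph_one_iff]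
  exact lt_irrefl _

lemma exists_le_mem_of_not_countable {S : Set Ω₁} (hS : ¬ S.Countable) (a : Ω₁) :
    ∃ b ∈ S, a ≤ b := by
  by_contra! h
  exact hS ((countable_Iic_omega_one a).mono fun b hb => (h b hb).le)

/-- `F a` dominates `f` on `Iic a`, so a bound of `F` on a cofinal set would bound all of `f`. -/
lemma exists_strictMono_forall_not_bddFam (f : Ω₁ → ℕ → ℕ) (hf : ¬ BddFam (range f)) :
    ∃ F : Ω₁ → ℕ → ℕ,
      (∀ a, StrictMono (F a)) ∧ ∀ S : Set Ω₁, ¬ S.Countable → ¬ BddFam (F '' S) := by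
  have hb (a : Ω₁) : BddFam (f '' Iic a) := .of_countable ((countable_Iic_omega_one a).image f)
  choose g hg using hb
  refine ⟨fun a => strictMajorant (g a), fun a => strictMono_strictMajorant _,
    fun S hS ⟨h, hh⟩ => hf ⟨h, ?_⟩⟩
  rintro _ ⟨c, rfl⟩
  obtain ⟨a, ha, hca⟩ := exists_le_mem_of_not_countable hS c
  filter_upwards [hg a (f c) ⟨c, hca, rfl⟩, hh _ ⟨a, ha, rfl⟩] with n h1 h2
  exact h1.trans ((le_strictMajorant _ n).trans h2)

noncomputable def cantorTerm (k : ℕ) : ℝ := 2 * (1 / 3) ^ (k + 1)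

/-- The point of the middle-thirds Cantor set whose ternary digits equal `2` exactly at the
places `p n + 1`. -/
noncomputable def cantorCode (p : ℕ → ℕ) : ℝ := ∑' n, cantorTerm (p n)

noncomputable def finiteCantorCodes : Set ℝ :=
  range fun x : Σ n, Fin n → ℕ => ∑ j, cantorTerm (x.2 j)

lemma cantorTerm_nonneg (k : ℕ) : 0 ≤ cantorTerm k := by unfold cantorTerm; positivity

lemma cantorTerm_antitone : Antitone cantorTerm := fun i j hij =>
  mul_le_mul_of_nonneg_left (pow_le_pow_of_le_one (by norm_num) (by norm_num) (by omega))
    zero_le_two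

lemma summable_cantorTerm : Summable cantorTerm := by
  refine (((summable_geometric_of_lt_one (by norm_num) (by norm_num : (1 / 3 : ℝ) < 1)).mul_right
    (1 / 3)).mul_left 2).congr fun k => ?_
  rw [cantorTerm, pow_succ]

lemma summable_cantorTerm_comp {p : ℕ → ℕ} (hp : StrictMono p) :
    Summable fun n => cantorTerm (p n) :=
  .of_nonneg_of_le (fun _ => cantorTerm_nonneg _) (fun n => cantorTerm_antitone (hp.id_le n))
    summable_cantorTerm

lemma tsum_cantorTerm_add (k : ℕ) : ∑' j, cantorTerm (k + j) = (1 / 3) ^ k := by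
  have h (j : ℕ) : cantorTerm (k + j) = 2 * (1 / 3) ^ (k + 1) * (1 / 3) ^ j := by
    rw [cantorTerm]; ring
  rw [tsum_congr h, tsum_mul_left, tsum_geometric_of_lt_one (by norm_num) (by norm_num)]
  ring

lemma cantorCode_sub_sum_le {p : ℕ → ℕ} (hp : StrictMono p) (n : ℕ) :
    cantorCode p - ∑ j ∈ Finset.range n, cantorTerm (p j) ≤ (1 / 3) ^ p n := by
  rw [cantorCode, ← (summable_cantorTerm_comp hp).sum_add_tsum_nat_add n, add_sub_cancel_left,
    ← tsum_cantorTerm_add]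
  refine Summable.tsum_le_tsum (fun j => cantorTerm_antitone ?_)
    ((summable_cantorTerm_comp hp).comp_injective (add_left_injective n))
    (summable_cantorTerm_comp (strictMono_id.const_add (p n)))
  simpa [add_comm] using hp.add_le_nat j n

lemma sum_add_cantorTerm_le_cantorCode {p : ℕ → ℕ} (hp : StrictMono p) (n : ℕ) :
    ∑ j ∈ Finset.range n, cantorTerm (p j) + cantorTerm (p n) ≤ cantorCode p := by
  rw [← Finset.sum_range_succ]
  exact (summable_cantorTerm_comp hp).sum_le_tsum _ fun j _ => cantorTerm_nonneg _

lemma cantorCode_lt_cantorCode {p q : ℕ → ℕ} (hp : StrictMono p) (hq : StrictMono q) {n : ℕ}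
    (heq : ∀ j < n, p j = q j) (hlt : p n < q n) : cantorCode q < cantorCode p := by
  have hsum : ∑ j ∈ Finset.range n, cantorTerm (p j) = ∑ j ∈ Finset.range n, cantorTerm (q j) :=
    Finset.sum_congr rfl fun j hj => by rw [heq j (Finset.mem_range.1 hj)]
  have hgap : (1 / 3 : ℝ) ^ q n < cantorTerm (p n) := by
    have : (1 / 3 : ℝ) ^ q n ≤ (1 / 3) ^ (p n + 1) :=
      pow_le_pow_of_le_one (by norm_num) (by norm_num) hlt
    have : (0 : ℝ) < (1 / 3) ^ (p n + 1) := by positivity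
    rw [cantorTerm]
    linarith
  linarith [cantorCode_sub_sum_le hq n, sum_add_cantorTerm_le_cantorCode hp n]

lemma injOn_cantorCode : InjOn cantorCode {p | StrictMono p} := by
  intro p hp q hq hpq
  by_contra hne
  have hex : ∃ n, p n ≠ q n := Function.ne_iff.1 hne
  have heq (j) (hj : j < Nat.find hex) : p j = q j := not_not.1 (Nat.find_min hex hj)
  rcases (Nat.find_spec hex).lt_or_gt with hlt | hlt
  · exact (cantorCode_lt_cantorCode hp hq heq hlt).ne' hpq
  · exact (cantorCode_lt_cantorCode hq hp (fun j hj => (heq j hj).symm) hlt).ne hpq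

lemma bddFam_of_forall_cantorCode_notMem {U : Set ℝ} (hU : IsOpen U) (hDU : finiteCantorCodes ⊆ U)
    {P : Set (ℕ → ℕ)} (hP : ∀ p ∈ P, StrictMono p ∧ cantorCode p ∉ U) : BddFam P := by
  by_contra hPb
  obtain ⟨n, s, hs⟩ := exists_prefix_not_bddAbove hPb
  have hd : ∑ j, cantorTerm (s j) ∈ U := hDU ⟨⟨n, s⟩, rfl⟩
  obtain ⟨ε, hε, hball⟩ := Metric.isOpen_iff.1 hU _ hd
  obtain ⟨k, hk⟩ := exists_pow_lt_of_lt_one hε (by norm_num : (1 / 3 : ℝ) < 1)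
  obtain ⟨_, ⟨p, ⟨hpP, hps⟩, rfl⟩, hpk⟩ := not_bddAbove_iff.1 hs k
  have hhead : ∑ j ∈ Finset.range n, cantorTerm (p j) = ∑ j, cantorTerm (s j) := by
    rw [← Fin.sum_univ_eq_sum_range]
    exact Finset.sum_congr rfl fun j _ => by rw [hps j]
  obtain ⟨hp, hpU⟩ := hP p hpP
  have hnonneg : 0 ≤ cantorCode p - ∑ j ∈ Finset.range n, cantorTerm (p j) := by
    linarith [sum_add_cantorTerm_le_cantorCode hp n, cantorTerm_nonneg (p n)]
  refine hpU (hball ?_)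
  rw [Metric.mem_ball, Real.dist_eq, ← hhead, abs_of_nonneg hnonneg]
  calc _ ≤ (1 / 3 : ℝ) ^ p n := cantorCode_sub_sum_le hp n
    _ ≤ (1 / 3) ^ k := pow_le_pow_of_le_one (by norm_num) (by norm_num) hpk.le
    _ < ε := hk

section Selection

variable {Y : Type*} [TopologicalSpace Y]

lemma IsOpenCover.exists_mem {𝒰 : Set (Set Y)} (h : IsOpenCover 𝒰) (y : Y) : ∃ U ∈ 𝒰, y ∈ U :=
  mem_sUnion.1 (h.2.symm ▸ mem_univ y)

lemma IsOpenCover.nonempty [Nonempty Y] {𝒰 : Set (Set Y)} (h : IsOpenCover 𝒰) : 𝒰.Nonempty :=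
  let ⟨U, hU, _⟩ := h.exists_mem (Classical.arbitrary Y)
  ⟨U, hU⟩

lemma exists_selection_cover_of_countable [Nonempty Y] {C : Set Y} (hC : C.Countable)
    {𝒰 : ℕ → Set (Set Y)} (h𝒰 : ∀ n, IsOpenCover (𝒰 n)) :
    ∃ U : ℕ → Set Y, (∀ n, U n ∈ 𝒰 n) ∧ C ⊆ ⋃ n, U n := by
  obtain ⟨c, hc⟩ := (hC.insert (Classical.arbitrary Y)).exists_eq_range (insert_nonempty _ _)
  choose U hU hcU using fun n => (h𝒰 n).exists_mem (c n)
  refine ⟨U, hU, fun y hy => ?_⟩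
  obtain ⟨n, rfl⟩ : y ∈ range c := hc ▸ mem_insert_of_mem _ hy
  exact mem_iUnion.2 ⟨n, hcU n⟩

def IsConcentratedOn (Z D : Set Y) : Prop :=
  ∀ U : Set Y, IsOpen U → D ⊆ U → (Z \ U).Countable

/-- Spend the even stages on covering `D`; what the chosen sets miss is countable and is covered
at the odd stages. -/
lemma s1OO_of_isConcentratedOn_univ [Nonempty Y] {D : Set Y} (hD : D.Countable)
    (hconc : IsConcentratedOn Set.univ D) : S1OO Y := by
  intro 𝒰 h𝒰
  let e := Equiv.natSumNatEquivNat
  obtain ⟨A, hA, hDA⟩ := exists_selection_cover_of_countable hD fun n => h𝒰 (e (.inl n))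
  have hrest : (Set.univ \ ⋃ n, A n).Countable :=
    hconc _ (isOpen_iUnion fun n => (h𝒰 _).1 _ (hA n)) hDA
  obtain ⟨B, hB, hRB⟩ := exists_selection_cover_of_countable hrest fun n => h𝒰 (e (.inr n))
  refine ⟨fun n => Sum.elim A B (e.symm n), fun n => ?_, eq_univ_of_forall fun y => ?_⟩
  · obtain ⟨k | k, rfl⟩ := e.surjective n
    · simpa using hA k
    · simpa using hB k
  · by_cases hy : y ∈ ⋃ n, A n
    · obtain ⟨k, hk⟩ := mem_iUnion.1 hy
      exact mem_iUnion.2 ⟨e (.inl k), by simpa using hk⟩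
    · obtain ⟨k, hk⟩ := mem_iUnion.1 (hRB ⟨mem_univ y, hy⟩)
      exact mem_iUnion.2 ⟨e (.inr k), by simpa using hk⟩

lemma IsConcentratedOn.preimage_val {Z D : Set Y} (hconc : IsConcentratedOn Z D) (hDZ : D ⊆ Z) :
    IsConcentratedOn (Set.univ : Set Z) (Subtype.val ⁻¹' D) := by
  intro U hU hDU
  obtain ⟨V, hV, rfl⟩ := isOpen_induced_iff.1 hU
  have hDV : D ⊆ V := fun d hd => hDU (show (⟨d, hDZ hd⟩ : Z) ∈ Subtype.val ⁻¹' D from hd)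
  refine ((hconc V hV hDV).preimage Subtype.val_injective).mono ?_
  rintro z ⟨-, hz⟩
  exact ⟨z.2, hz⟩

lemma IsConcentratedOn.s1OO {Z D : Set Y} (hconc : IsConcentratedOn Z D) (hD : D.Countable)
    (hDZ : D ⊆ Z) (hDne : D.Nonempty) : S1OO Z :=
  have : Nonempty Z := (hDne.mono hDZ).to_subtype
  s1OO_of_isConcentratedOn_univ (hD.preimage Subtype.val_injective) (hconc.preimage_val hDZ)

end Selection

lemma StronglyNull.mono {X Y : Set ℝ} (hYX : Y ⊆ X) (hX : StronglyNull X) : StronglyNull Y :=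
  fun ε hε =>
    let ⟨I, hI, hXI⟩ := hX ε hε
    ⟨I, hI, hYX.trans hXI⟩

/-- A single `g` bounds, for almost all `n`, the index `φ x n` of a radius `1 / (φ x n + 1)` at
which `x` fits into a member of `𝒰 n`. Cover `X` by sets of diameter `< 1 / (g n + 1)` so that
each point is covered at a stage `⟪m, j⟫` beyond any given `m`; then at stage `n` one member of
`𝒰 n` swallows the whole `n`-th covering set. -/
lemma StronglyNull.s1OO {X : Set ℝ} [Nonempty X] (hX : StronglyNull X)
    (hb : ∀ φ : X → ℕ → ℕ, BddFam (range φ)) : S1OO X := by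
  intro 𝒰 h𝒰
  have hrad (x : X) (n : ℕ) : ∃ k : ℕ, ∃ U ∈ 𝒰 n, Metric.ball x (1 / (k + 1)) ⊆ U := by
    obtain ⟨U, hU, hxU⟩ := (h𝒰 n).exists_mem x
    obtain ⟨ε, hε, hball⟩ := Metric.isOpen_iff.1 ((h𝒰 n).1 U hU) x hxU
    obtain ⟨k, hk⟩ := exists_nat_one_div_lt hε
    exact ⟨k, U, hU, (Metric.ball_subset_ball hk.le).trans hball⟩
  choose φ V hV hball using hrad
  obtain ⟨g, hg⟩ := hb φ
  choose J hJ using fun m =>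
    hX (fun j => 1 / (g (Nat.pair m j) + 1)) fun _ => Nat.one_div_pos_of_nat
  have hsel (n : ℕ) : ∃ U ∈ 𝒰 n,
      ∀ x : X, (x : ℝ) ∈ J n.unpair.1 n.unpair.2 → φ x n ≤ g n → x ∈ U := by
    by_cases hy : ∃ y : X, (y : ℝ) ∈ J n.unpair.1 n.unpair.2 ∧ φ y n ≤ g n
    · obtain ⟨y, hyJ, hyg⟩ := hy
      refine ⟨V y n, hV y n, fun x hxJ _ => hball y n ?_⟩
      have hdiam := (hJ n.unpair.1).1 n.unpair.2
      rw [Nat.pair_unpair] at hdiam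
      calc dist x y < 1 / (g n + 1) :=
            edist_lt_ofReal.1 ((Metric.edist_le_ediam_of_mem hxJ hyJ).trans_lt hdiam)
        _ ≤ 1 / (φ y n + 1) := Nat.one_div_le_one_div hyg
    · obtain ⟨U, hU⟩ := (h𝒰 n).nonempty
      exact ⟨U, hU, fun x hxJ hxg => (hy ⟨x, hxJ, hxg⟩).elim⟩
  choose U hU hJU using hsel
  refine ⟨U, hU, eq_univ_of_forall fun x => ?_⟩
  obtain ⟨m, hm⟩ := eventually_atTop.1 (hg _ ⟨x, rfl⟩)
  obtain ⟨j, hj⟩ := mem_iUnion.1 ((hJ m).2 x.2)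
  refine mem_iUnion.2 ⟨Nat.pair m j, hJU _ x ?_ (hm _ (Nat.left_le_pair m j))⟩
  rwa [Nat.unpair_pair]

universe u

lemma exists_subset_not_countable_forall_bddFam {α : Type u} {X : Set α} (hX : ¬ X.Countable)
    (hb : ∀ f : Ω₁ → ℕ → ℕ, BddFam (range f)) :
    ∃ Y ⊆ X, ¬ Y.Countable ∧ ∀ φ : Y → ℕ → ℕ, BddFam (range φ) := by
  obtain ⟨ι⟩ : Nonempty (Ω₁ ↪ X) := by
    rwa [← lift_mk_le', mk_toType, card_omega, lift_aleph, Ordinal.lift_one,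
      Cardinal.lift_id'.{0, u}, aleph_one_le_iff, ← not_le, le_aleph0_iff_set_countable]
  refine ⟨range (Subtype.val ∘ ι), range_subset_iff.2 fun a => (ι a).2, fun hY => ?_, fun φ => ?_⟩
  · have := hY.preimage (Subtype.val_injective.comp ι.injective)
    rw [preimage_range] at this
    exact not_countable_univ_omega_one this
  · rw [← rangeFactorization_surjective.range_comp]
    exact hb _

lemma exists_not_countable_s1OO_of_not_bddFam (f : Ω₁ → ℕ → ℕ) (hf : ¬ BddFam (range f)) :
    ∃ Z : Set ℝ, ¬ Z.Countable ∧ S1OO Z := by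
  obtain ⟨F, hFmono, hF⟩ := exists_strictMono_forall_not_bddFam f hf
  have hinj : InjOn cantorCode (range F) :=
    injOn_cantorCode.mono (range_subset_iff.2 hFmono)
  refine ⟨finiteCantorCodes ∪ range (cantorCode ∘ F), fun hZ => ?_, ?_⟩
  · have hFc : (range F).Countable := by
      refine (mapsTo_range_iff.2 fun a => ?_).countable_of_injOn hinj hZ
      exact subset_union_right (mem_range_self a)
    exact hF Set.univ not_countable_univ_omega_one (image_univ ▸ .of_countable hFc)
  refine IsConcentratedOn.s1OO (fun U hU hDU => ?_) (countable_range _) subset_union_left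
    ⟨_, ⟨0, Fin.elim0⟩, rfl⟩
  have hS : {a | cantorCode (F a) ∉ U}.Countable := by
    by_contra hS
    refine hF _ hS (bddFam_of_forall_cantorCode_notMem hU hDU ?_)
    rintro _ ⟨a, ha, rfl⟩
    exact ⟨hFmono a, ha⟩
  refine (hS.image (cantorCode ∘ F)).mono ?_
  rintro _ ⟨hD | ⟨a, rfl⟩, hU'⟩
  · exact (hU' (hDU hD)).elim
  · exact ⟨a, hU', rfl⟩

/-- Miller: Borel's Conjecture for the Rothberger property implies Borel's Conjecture. -/
theorem BC_for_rothberger_implies_BC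
    (h : ∀ X : Set ℝ, S1OO X → X.Countable) :
    ∀ X : Set ℝ, StronglyNull X → X.Countable := by
  intro X hX
  by_contra hXc
  by_cases hb : ∀ f : Ω₁ → ℕ → ℕ, BddFam (range f)
  · obtain ⟨Y, hYX, hYc, hYb⟩ := exists_subset_not_countable_forall_bddFam hXc hb
    have : Nonempty Y := (Set.Infinite.nonempty fun hfin => hYc hfin.countable).to_subtype
    exact hYc (h Y ((hX.mono hYX).s1OO hYb))
  · obtain ⟨f, hf⟩ := not_forall.1 hb
    obtain ⟨Z, hZc, hZ⟩ := exists_not_countable_s1OO_of_not_bddFam f hf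
    exact hZc (h Z hZ)
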